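/- arXiv:1901.05336 — 5 statements merged into one kernel-verified Lean document; each statement's English description precedes it below -/
import Mathlib

section
/- For every r > 0, the series ∑_{n=0}^{∞} p(n, r)/(n + 1) converges and equals (1/r) · (1 - (1 + r/3.5)^(-3.5)), i.e., the expected value of 1/(N+1) under the cell-occupancy distribution p(·, r) equals L(r)/r where L(r) = 1 - (1 + r/3.5)^(-3.5). -/
/-!
With `x = r / (s + r)` (here `s = 3.5`), `p(n, r) / (n + 1)` is `(1 - x) ^ s / r` times the
coefficient `Γ(s + m) / (Γ(s) m!) x ^ m` of the binomial series of `(1 - x) ^ (-s)` at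
`m = n + 1`. Summing over `n` therefore gives that series minus its constant term `1`,
multiplied by `(1 - x) ^ s / r`, and `(1 - x) ^ s = (1 + r / s) ^ (-s)`.
-/

/-- Eq. (3): cell-occupancy probability mass function. -/
noncomputable def cellOcc (n : ℕ) (r : ℝ) : ℝ :=
  (3.5 : ℝ) ^ (3.5 : ℝ) * Real.Gamma ((n : ℝ) + 4.5) * r ^ n /
    (Real.Gamma 3.5 * Real.Gamma ((n : ℝ) + 1) * (3.5 + r) ^ ((n : ℝ) + 4.5))

open Polynomial Nat

theorem Real.Gamma_add_nat_eq_mul_ascPochhammer {s : ℝ} (hs : 0 < s) (n : ℕ) :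
    Real.Gamma (s + n) = Real.Gamma s * (ascPochhammer ℝ n).eval s := by
  induction n with
  | zero => simp
  | succ n ih =>
    rw [Nat.cast_succ, ← add_assoc, Real.Gamma_add_one (by positivity), ih,
      ascPochhammer_succ_eval]
    ring

theorem Ring.choose_add_sub_one_eq_Gamma {s : ℝ} (hs : 0 < s) (n : ℕ) :
    Ring.choose (s + n - 1) n = Real.Gamma (s + n) / (Real.Gamma s * n !) := by
  rw [Ring.choose_eq_smul, descPochhammer_smeval_eq_ascPochhammer, ascPochhammer_smeval_cast,
    ascPochhammer_smeval_eq_eval, Real.Gamma_add_nat_eq_mul_ascPochhammer hs, smul_eq_mul,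
    show s + n - 1 - n + 1 = s by ring]
  field_simp [(Real.Gamma_pos_of_pos hs).ne']

theorem Real.hasSum_Gamma_div_mul_pow {s x : ℝ} (hs : 0 < s) (hx : |x| < 1) :
    HasSum (fun n : ℕ => Real.Gamma (s + n) / (Real.Gamma s * n !) * x ^ n)
      ((1 - x) ^ (-s)) := by
  have h := (Real.one_div_one_sub_rpow_hasFPowerSeriesOnBall_zero s).hasSum
    (y := x) (by simpa [enorm_eq_nnnorm, ← NNReal.coe_lt_one] using hx)
  simp only [FormalMultilinearSeries.ofScalars_apply_eq, zero_add, smul_eq_mul,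
    Ring.choose_add_sub_one_eq_Gamma hs] at h
  have h1x : 0 ≤ 1 - x := by linarith [le_abs_self x]
  rwa [one_div, ← Real.rpow_neg h1x] at h

theorem Real.hasSum_Gamma_div_mul_pow_succ {s x : ℝ} (hs : 0 < s) (hx : |x| < 1) :
    HasSum (fun n : ℕ => Real.Gamma (s + ↑(n + 1)) / (Real.Gamma s * (n + 1)!) * x ^ (n + 1))
      ((1 - x) ^ (-s) - 1) := by
  have h := (hasSum_nat_add_iff' 1).mpr (Real.hasSum_Gamma_div_mul_pow hs hx)
  simpa [(Real.Gamma_pos_of_pos hs).ne'] using h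

noncomputable def occupancyPMF (s r : ℝ) (n : ℕ) : ℝ :=
  s ^ s * Real.Gamma (n + (s + 1)) * r ^ n /
    (Real.Gamma s * Real.Gamma (n + 1) * (s + r) ^ (n + (s + 1)))

theorem occupancyPMF_div_succ {s r : ℝ} (hs : 0 < s) (hr : 0 < r) (n : ℕ) :
    occupancyPMF s r n / (n + 1) =
      Real.Gamma (s + ↑(n + 1)) / (Real.Gamma s * (n + 1)!) * (r / (s + r)) ^ (n + 1) *
        ((s / (s + r)) ^ s / r) := by
  have hsr : 0 < s + r := by positivity
  have hpow : (s + r) ^ ((n : ℝ) + (s + 1)) = (s + r) ^ s * (s + r) ^ (n + 1) := by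
    rw [show (n : ℝ) + (s + 1) = s + ↑(n + 1) by push_cast; ring, Real.rpow_add hsr,
      Real.rpow_natCast]
  rw [occupancyPMF, Real.Gamma_nat_eq_factorial, hpow, Real.div_rpow hs.le hsr.le, div_pow,
    Nat.factorial_succ, show s + ↑(n + 1) = n + (s + 1) by push_cast; ring]
  have hΓ := Real.Gamma_pos_of_pos hs
  field_simp
  push_cast
  ring

theorem hasSum_occupancyPMF_div_succ {s r : ℝ} (hs : 0 < s) (hr : 0 < r) :
    HasSum (fun n : ℕ => occupancyPMF s r n / (n + 1)) ((1 / r) * (1 - (1 + r / s) ^ (-s))) := by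
  have hsr : 0 < s + r := by positivity
  have hx : |r / (s + r)| < 1 := by
    rw [abs_of_pos (by positivity), div_lt_one hsr]
    linarith
  have h1x : 1 - r / (s + r) = s / (s + r) := by field_simp; ring
  have hvalue : ((1 - r / (s + r)) ^ (-s) - 1) * ((s / (s + r)) ^ s / r) =
      (1 / r) * (1 - (1 + r / s) ^ (-s)) := by
    rw [h1x, show 1 + r / s = (s / (s + r))⁻¹ by field_simp, Real.rpow_neg (by positivity),
      Real.inv_rpow (by positivity), Real.rpow_neg (by positivity), inv_inv]
    have hpos : 0 < (s / (s + r)) ^ s := by positivity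
    field_simp
  rw [← hvalue]
  simpa only [occupancyPMF_div_succ hs hr] using
    (Real.hasSum_Gamma_div_mul_pow_succ hs hx).mul_right ((s / (s + r)) ^ s / r)

theorem cellOcc_eq_occupancyPMF (n : ℕ) (r : ℝ) : cellOcc n r = occupancyPMF 3.5 r n := by
  norm_num [cellOcc, occupancyPMF]

theorem cellOcc_expectation_inv_succ (r : ℝ) (hr : 0 < r) :
    HasSum (fun n : ℕ => cellOcc n r / ((n : ℝ) + 1))
      ((1 / r) * (1 - (1 + r / 3.5) ^ (-3.5 : ℝ))) := by
  simpa only [cellOcc_eq_occupancyPMF] using hasSum_occupancyPMF_div_succ (by norm_num) hr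
end

section
/- For all constants k₁ > 0, k₂ > 0 and every exponent c with 0 < c ≤ 1, the potential spectral efficiency function F(B, P) = k₁ · B · (1 - exp(-k₂ · (P/B)^c)) is concave on the convex set {(B, P) ∈ ℝ² : B > 0, P ≥ 0}. (This is the joint curvature property, in the bandwidth and power variables, of the PSE of Eq. (6) that underlies Lemma 2 of the paper; F is the perspective of the concave function t ↦ k₁(1 - exp(-k₂ t^c)).) -/
/-! F is k₁ times the perspective (B, P) ↦ B · g(P / B) of g(t) = 1 - exp(-k₂ t^c), which is
concave on [0, ∞) as a concave antitone function of the convex function -k₂ t^c. The perspective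
of a concave function is concave because, with B = a B₁ + b B₂, the ratio (a P₁ + b P₂) / B is
the convex combination of P₁ / B₁ and P₂ / B₂ with weights a B₁ / B and b B₂ / B. -/

open Real Set

section Perspective

variable {E : Type*} [AddCommGroup E] [Module ℝ E]

lemma exists_convex_weights_inv_smul_add {x y a b : ℝ} (hx : 0 < x) (hy : 0 < y)
    (ha : 0 ≤ a) (hb : 0 ≤ b) (hab : a + b = 1) (u v : E) :
    ∃ w₁ w₂ : ℝ, 0 ≤ w₁ ∧ 0 ≤ w₂ ∧ w₁ + w₂ = 1 ∧
      a * x = (a * x + b * y) * w₁ ∧ b * y = (a * x + b * y) * w₂ ∧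
      (a * x + b * y)⁻¹ • (a • u + b • v) = w₁ • (x⁻¹ • u) + w₂ • (y⁻¹ • v) := by
  have hB : 0 < a * x + b * y := convex_Ioi (0 : ℝ) hx hy ha hb hab
  refine ⟨a * x / (a * x + b * y), b * y / (a * x + b * y), by positivity, by positivity,
    by rw [← add_div, div_self hB.ne'], by field_simp, by field_simp, ?_⟩
  simp only [smul_add, smul_smul]
  congr 2 <;> field_simp

variable {s : Set E} {g : E → ℝ}

theorem ConcaveOn.perspective (hg : ConcaveOn ℝ s g) :
    ConcaveOn ℝ {p : ℝ × E | 0 < p.1 ∧ p.1⁻¹ • p.2 ∈ s} (fun p => p.1 * g (p.1⁻¹ • p.2)) := by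
  refine ⟨?_, ?_⟩
  · rintro p ⟨hp, hps⟩ q ⟨hq, hqs⟩ a b ha hb hab
    obtain ⟨w₁, w₂, hw₁, hw₂, hw, -, -, hcomb⟩ :=
      exists_convex_weights_inv_smul_add hp hq ha hb hab p.2 q.2
    refine ⟨convex_Ioi (0 : ℝ) hp hq ha hb hab, ?_⟩
    change (a * p.1 + b * q.1)⁻¹ • (a • p.2 + b • q.2) ∈ s
    exact hcomb ▸ hg.1 hps hqs hw₁ hw₂ hw
  · rintro p ⟨hp, hps⟩ q ⟨hq, hqs⟩ a b ha hb hab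
    obtain ⟨w₁, w₂, hw₁, hw₂, hw, hpw, hqw, hcomb⟩ :=
      exists_convex_weights_inv_smul_add hp hq ha hb hab p.2 q.2
    calc a * (p.1 * g (p.1⁻¹ • p.2)) + b * (q.1 * g (q.1⁻¹ • q.2))
        = (a * p.1 + b * q.1) * (w₁ * g (p.1⁻¹ • p.2) + w₂ * g (q.1⁻¹ • q.2)) := by
          linear_combination g (p.1⁻¹ • p.2) * hpw + g (q.1⁻¹ • q.2) * hqw
      _ ≤ (a * p.1 + b * q.1) * g ((a * p.1 + b * q.1)⁻¹ • (a • p.2 + b • q.2)) := by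
          rw [hcomb]
          exact mul_le_mul_of_nonneg_left (hg.2 hps hqs hw₁ hw₂ hw)
            (convex_Ioi (0 : ℝ) hp hq ha hb hab).le

end Perspective

theorem ConcaveOn.comp_convexOn_of_antitone {E : Type*} [AddCommMonoid E] [Module ℝ E]
    {s : Set E} {f : E → ℝ} {g : ℝ → ℝ} (hg : ConcaveOn ℝ univ g) (hg' : Antitone g)
    (hf : ConvexOn ℝ s f) : ConcaveOn ℝ s (g ∘ f) :=
  ⟨hf.1, fun _ hx _ hy _ _ ha hb hab =>
    (hg.2 trivial trivial ha hb hab).trans (hg' (hf.2 hx hy ha hb hab))⟩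

lemma concaveOn_one_sub_exp_neg_mul_rpow {k c : ℝ} (hk : 0 ≤ k) (hc₀ : 0 ≤ c) (hc₁ : c ≤ 1) :
    ConcaveOn ℝ (Ici 0) (fun t : ℝ => 1 - exp (-k * t ^ c)) := by
  have hinner : ConvexOn ℝ (Ici 0) (fun t : ℝ => -k * t ^ c) :=
    ((concaveOn_rpow hc₀ hc₁).smul hk).neg.congr fun t _ => by simp [neg_mul]
  have houter : ConcaveOn ℝ univ (fun u : ℝ => 1 - exp u) :=
    (concaveOn_const 1 convex_univ).sub convexOn_exp
  exact houter.comp_convexOn_of_antitone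
    (fun u v huv => sub_le_sub_left (exp_le_exp.2 huv) 1) hinner

theorem PSE_concaveOn (k₁ k₂ c : ℝ) (hk₁ : 0 < k₁) (hk₂ : 0 < k₂)
    (hc0 : 0 < c) (hc1 : c ≤ 1) :
    ConcaveOn ℝ {p : ℝ × ℝ | 0 < p.1 ∧ 0 ≤ p.2}
      (fun p : ℝ × ℝ => k₁ * p.1 * (1 - Real.exp (-k₂ * (p.2 / p.1) ^ c))) := by
  have h := ((concaveOn_one_sub_exp_neg_mul_rpow hk₂.le hc0.le hc1).perspective).smul hk₁.le
  have hset : {p : ℝ × ℝ | 0 < p.1 ∧ p.1⁻¹ • p.2 ∈ Ici 0} = {p | 0 < p.1 ∧ 0 ≤ p.2} := by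
    ext ⟨B, P⟩
    simp only [mem_ofPred_eq, mem_Ici, smul_eq_mul, and_congr_right_iff]
    exact fun hB => mul_nonneg_iff_of_pos_left (inv_pos.2 hB)
  rw [hset] at h
  exact h.congr fun p _ => by simp only [smul_eq_mul, inv_mul_eq_div, mul_assoc]
end

section
/- For all constants k₁ > 0, k₂ > 0, every exponent c with 0 < c ≤ 1, all bandwidths B₁, B₂ > 0 and powers P₁, P₂ ≥ 0, equality F(B₁ + B₂, P₁ + P₂) = F(B₁, P₁) + F(B₂, P₂) holds for the potential spectral efficiency F(B, P) = k₁ · B · (1 - exp(-k₂ · (P/B)^c)) if and only if the two allocations have equal power-to-bandwidth ratios, i.e., P₁ · B₂ = P₂ · B₁; in particular the inequality F(B₁ + B₂, P₁ + P₂) > F(B₁, P₁) + F(B₂, P₂) is strict whenever P₁/B₁ ≠ P₂/B₂. -/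
/-!
Write `F(B, P) = k₁ · B · g(P / B)` with `g x = 1 - exp (-k₂ · x ^ c)`. The function `g` is
strictly concave on `[0, ∞)`, being a strictly concave increasing function of the concave,
injective `x ↦ x ^ c`. Since `(P₁ + P₂) / (B₁ + B₂)` is the convex combination of `P₁ / B₁` and
`P₂ / B₂` with weights `B₁ / (B₁ + B₂)` and `B₂ / (B₁ + B₂)`, strict Jensen for `g` gives
the strict inequality when the ratios differ; when they agree, `(P₁ + P₂) / (B₁ + B₂)` is the
common ratio and `F` is additive.
-/

open Real Set

lemma add_div_add_eq_left_of_div_eq {K : Type*} [Field K] {a b c d : K} (hb : b ≠ 0)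
    (hd : d ≠ 0) (hbd : b + d ≠ 0) (h : a / b = c / d) : (a + c) / (b + d) = a / b := by
  rw [div_eq_div_iff hb hd] at h
  rw [div_eq_div_iff hbd hb]
  linear_combination -h

lemma mul_apply_add_div_add_of_div_eq {K : Type*} [Field K] (f : K → K) {a b c d : K}
    (hb : b ≠ 0) (hd : d ≠ 0) (hbd : b + d ≠ 0) (h : a / b = c / d) :
    (b + d) * f ((a + c) / (b + d)) = b * f (a / b) + d * f (c / d) := by
  rw [add_div_add_eq_left_of_div_eq hb hd hbd h, h]
  ring

lemma add_div_add_eq_convex_combination {K : Type*} [Field K] {a b c d : K} (hb : b ≠ 0)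
    (hd : d ≠ 0) (hbd : b + d ≠ 0) :
    (a + c) / (b + d) = b / (b + d) * (a / b) + d / (b + d) * (c / d) := by
  field_simp

lemma StrictConcaveOn.mul_div_add_mul_div_lt {s : Set ℝ} {f : ℝ → ℝ}
    (hf : StrictConcaveOn ℝ s f) {B₁ B₂ P₁ P₂ : ℝ} (hB₁ : 0 < B₁) (hB₂ : 0 < B₂)
    (h₁ : P₁ / B₁ ∈ s) (h₂ : P₂ / B₂ ∈ s) (hne : P₁ / B₁ ≠ P₂ / B₂) :
    B₁ * f (P₁ / B₁) + B₂ * f (P₂ / B₂) < (B₁ + B₂) * f ((P₁ + P₂) / (B₁ + B₂)) := by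
  have hB : 0 < B₁ + B₂ := add_pos hB₁ hB₂
  have jensen := hf.2 h₁ h₂ hne (div_pos hB₁ hB) (div_pos hB₂ hB) (by field_simp)
  simp only [smul_eq_mul] at jensen
  rw [← add_div_add_eq_convex_combination hB₁.ne' hB₂.ne' hB.ne'] at jensen
  calc B₁ * f (P₁ / B₁) + B₂ * f (P₂ / B₂)
      = (B₁ + B₂) * (B₁ / (B₁ + B₂) * f (P₁ / B₁) + B₂ / (B₁ + B₂) * f (P₂ / B₂)) := by
        field_simp
    _ < (B₁ + B₂) * f ((P₁ + P₂) / (B₁ + B₂)) := mul_lt_mul_of_pos_left jensen hB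

lemma strictConcaveOn_one_sub_exp_neg_mul {k : ℝ} (hk : k ≠ 0) :
    StrictConcaveOn ℝ univ fun t : ℝ => 1 - exp (-k * t) := by
  refine ⟨convex_univ, fun x _ y _ hxy a b ha hb hab => ?_⟩
  have hne : -k * x ≠ -k * y := fun h => hxy (mul_left_cancel₀ (neg_ne_zero.2 hk) h)
  have jensen := strictConvexOn_exp.2 (mem_univ _) (mem_univ _) hne ha hb hab
  simp only [smul_eq_mul] at jensen ⊢
  have hlin : -k * (a * x + b * y) = a * (-k * x) + b * (-k * y) := by ring
  rw [hlin]
  linarith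

lemma strictConcaveOn_one_sub_exp_neg_mul_rpow {k c : ℝ} (hk : 0 < k) (hc₀ : 0 < c)
    (hc₁ : c ≤ 1) : StrictConcaveOn ℝ (Ici 0) fun x : ℝ => 1 - exp (-k * x ^ c) := by
  have hmono : MonotoneOn (fun t : ℝ => 1 - exp (-k * t)) ((· ^ c) '' Ici 0) :=
    fun _ _ _ _ hst => sub_le_sub_left (exp_le_exp.2 (mul_le_mul_of_nonpos_left hst (neg_nonpos.2 hk.le))) 1
  have himage : Convex ℝ ((· ^ c) '' Ici (0 : ℝ)) := Real.convex_iff_isPreconnected.2 <|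
    isPreconnected_Ici.image _ (continuous_rpow_const hc₀.le).continuousOn
  exact ((strictConcaveOn_one_sub_exp_neg_mul hk.ne').subset (subset_univ _) himage).comp_concaveOn
    (concaveOn_rpow hc₀.le hc₁) hmono (rpow_left_injOn hc₀.ne')

theorem PSE_superadditive_equality_iff (k₁ k₂ c : ℝ) (hk₁ : 0 < k₁) (hk₂ : 0 < k₂)
    (hc0 : 0 < c) (hc1 : c ≤ 1) (B₁ B₂ P₁ P₂ : ℝ)
    (hB₁ : 0 < B₁) (hB₂ : 0 < B₂) (hP₁ : 0 ≤ P₁) (hP₂ : 0 ≤ P₂) :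
    (k₁ * (B₁ + B₂) * (1 - Real.exp (-k₂ * ((P₁ + P₂) / (B₁ + B₂)) ^ c)) =
        k₁ * B₁ * (1 - Real.exp (-k₂ * (P₁ / B₁) ^ c)) +
        k₁ * B₂ * (1 - Real.exp (-k₂ * (P₂ / B₂) ^ c)) ↔ P₁ * B₂ = P₂ * B₁) ∧
    (P₁ / B₁ ≠ P₂ / B₂ →
      k₁ * (B₁ + B₂) * (1 - Real.exp (-k₂ * ((P₁ + P₂) / (B₁ + B₂)) ^ c)) >
        k₁ * B₁ * (1 - Real.exp (-k₂ * (P₁ / B₁) ^ c)) +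
        k₁ * B₂ * (1 - Real.exp (-k₂ * (P₂ / B₂) ^ c))) := by
  have hg := strictConcaveOn_one_sub_exp_neg_mul_rpow hk₂ hc0 hc1
  have hratio : P₁ / B₁ = P₂ / B₂ ↔ P₁ * B₂ = P₂ * B₁ := div_eq_div_iff hB₁.ne' hB₂.ne'
  have strict (hne : P₁ / B₁ ≠ P₂ / B₂) :
      k₁ * (B₁ + B₂) * (1 - exp (-k₂ * ((P₁ + P₂) / (B₁ + B₂)) ^ c)) >
        k₁ * B₁ * (1 - exp (-k₂ * (P₁ / B₁) ^ c)) + k₁ * B₂ * (1 - exp (-k₂ * (P₂ / B₂) ^ c)) := by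
    have jensen := hg.mul_div_add_mul_div_lt hB₁ hB₂ (div_nonneg hP₁ hB₁.le)
      (div_nonneg hP₂ hB₂.le) hne
    linarith [mul_lt_mul_of_pos_left jensen hk₁]
  refine ⟨⟨fun heq => hratio.1 ?_, fun hPB => ?_⟩, strict⟩
  · by_contra hne
    exact (strict hne).ne' heq
  · linear_combination k₁ * mul_apply_add_div_add_of_div_eq (fun x => 1 - exp (-k₂ * x ^ c))
      hB₁.ne' hB₂.ne' (add_pos hB₁ hB₂).ne' (hratio.2 hPB)
end

section
/- For all constants k₁ > 0, k₂ > 0, every exponent c with 0 < c ≤ 1 and every fixed transmit power P > 0, the potential spectral efficiency B ↦ F(B, P) = k₁ · B · (1 - exp(-k₂ · (P/B)^c)) is strictly increasing in the bandwidth B on (0, ∞). -/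
/-!
Put `a(B) = k₂ (P / B) ^ c` and `g(t) = (1 - exp (-t)) / t`. Then `B (1 - exp (-a(B))) = B a(B) · g(a(B))`.
The first factor `B a(B) = k₂ P ^ c B ^ (1 - c)` is nondecreasing because `c ≤ 1`. The second factor is
strictly increasing: `a` is strictly decreasing, and `g(t)` is the slope of the chord from `0` to `-t` of
the strictly convex function `exp`, so `g` is strictly decreasing too.
-/

open Real Set

theorem strictAntiOn_one_sub_exp_neg_div :
    StrictAntiOn (fun t : ℝ => (1 - exp (-t)) / t) (Ioi 0) := by
  intro s hs t ht hst
  have hchord := strictConvexOn_exp.secant_strict_mono (mem_univ 0) (mem_univ (-t)) (mem_univ (-s))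
    (neg_ne_zero.2 (ne_of_gt ht)) (neg_ne_zero.2 (ne_of_gt hs)) (neg_lt_neg hst)
  rwa [exp_zero, sub_zero, sub_zero, ← neg_sub 1, ← neg_sub 1, neg_div_neg_eq, neg_div_neg_eq]
    at hchord

theorem mul_div_rpow_eq {B : ℝ} (hB : 0 < B) {P : ℝ} (hP : 0 ≤ P) (c : ℝ) :
    B * (P / B) ^ c = P ^ c * B ^ (1 - c) := by
  rw [div_rpow hP hB.le, rpow_sub hB, rpow_one]
  ring

theorem monotoneOn_mul_div_rpow {P c : ℝ} (hP : 0 ≤ P) (hc : c ≤ 1) :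
    MonotoneOn (fun B : ℝ => B * (P / B) ^ c) (Ioi 0) := by
  intro x hx y hy hxy
  simp only [mul_div_rpow_eq hx hP, mul_div_rpow_eq hy hP]
  gcongr
  exact hx.out.le

theorem strictAntiOn_mul_div_rpow {k P c : ℝ} (hk : 0 < k) (hP : 0 < P) (hc : 0 < c) :
    StrictAntiOn (fun B : ℝ => k * (P / B) ^ c) (Ioi 0) := by
  intro x hx y hy hxy
  have hPyx : P / y < P / x := div_lt_div_of_pos_left hP hx hxy
  exact mul_lt_mul_of_pos_left (rpow_lt_rpow (div_pos hP hy).le hPyx hc) hk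

theorem MonotoneOn.mul_strictMonoOn {α β : Type*} [Mul α] [Zero α] [Preorder α]
    [PosMulStrictMono α] [MulPosMono α] [Preorder β] {f g : β → α} {s : Set β}
    (hf : MonotoneOn f s) (hg : StrictMonoOn g s) (hf0 : ∀ x ∈ s, 0 < f x)
    (hg0 : ∀ x ∈ s, 0 ≤ g x) : StrictMonoOn (fun x => f x * g x) s :=
  fun _ hx _ hy hxy =>
    mul_lt_mul_of_le_of_lt_of_nonneg_of_pos (hf hx hy hxy.le) (hg hx hy hxy) (hg0 _ hx) (hf0 _ hy)

theorem PSE_strictMono_in_bandwidth (k₁ k₂ c P : ℝ) (hk₁ : 0 < k₁) (hk₂ : 0 < k₂)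
    (hc0 : 0 < c) (hc1 : c ≤ 1) (hP : 0 < P) :
    StrictMonoOn (fun B : ℝ => k₁ * B * (1 - Real.exp (-k₂ * (P / B) ^ c)))
      (Set.Ioi (0 : ℝ)) := by
  set a : ℝ → ℝ := fun B => k₂ * (P / B) ^ c
  set g : ℝ → ℝ := fun t => (1 - exp (-t)) / t
  have ha_pos : MapsTo a (Ioi 0) (Ioi 0) := fun B hB => by
    simp only [a, mem_Ioi] at hB ⊢
    positivity
  have hBa : MonotoneOn (fun B => k₁ * B * a B) (Ioi 0) := fun x hx y hy hxy => by
    have := mul_le_mul_of_nonneg_left (monotoneOn_mul_div_rpow hP.le hc1 hx hy hxy)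
      (mul_pos hk₁ hk₂).le
    simp only [a]
    linarith
  have hga : StrictMonoOn (g ∘ a) (Ioi 0) :=
    strictAntiOn_one_sub_exp_neg_div.comp (strictAntiOn_mul_div_rpow hk₂ hP hc0) ha_pos
  refine (hBa.mul_strictMonoOn hga (fun B hB => ?_) (fun B hB => ?_)).congr fun B hB => ?_
  · exact mul_pos (mul_pos hk₁ hB) (ha_pos hB)
  · exact div_nonneg (sub_nonneg.2 (exp_le_one_iff.2 (neg_nonpos.2 (ha_pos hB).out.le)))
      (ha_pos hB).out.le
  · have ha_ne : a B ≠ 0 := (ha_pos hB).out.ne'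
    simp only [Function.comp, g, neg_mul]
    field_simp
    rfl
end

section
/- For all constants C > 0, A > 0 and Υ ≥ 0, the function ℓ ↦ C · (ℓ/(1 + ℓΥ)) · (1 - exp(-A · (1 + ℓΥ))) is strictly increasing on [0, ∞). -/
/-! The load factor `ℓ / (1 + ℓ Υ)` is strictly increasing and nonnegative on `[0, ∞)`, while the
coverage factor `1 - exp (-A (1 + ℓ Υ))` is increasing and positive there; the product of a strictly
increasing nonnegative function with an increasing positive one is strictly increasing. -/

open Set

theorem StrictMonoOn.mul_monotoneOn₀ {α M₀ : Type*} [Preorder α] [Mul M₀] [Zero M₀] [Preorder M₀]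
    [PosMulMono M₀] [MulPosStrictMono M₀] {f g : α → M₀} {s : Set α}
    (hf : StrictMonoOn f s) (hg : MonotoneOn g s) (hf₀ : ∀ x ∈ s, 0 ≤ f x)
    (hg₀ : ∀ x ∈ s, 0 < g x) : StrictMonoOn (fun x ↦ f x * g x) s :=
  fun _ hx _ hy hxy ↦ mul_lt_mul (hf hx hy hxy) (hg hx hy hxy.le) (hg₀ _ hx) (hf₀ _ hy)

section Load

variable {Υ : ℝ}

theorem one_add_mul_pos_of_nonneg (hΥ : 0 ≤ Υ) {ℓ : ℝ} (hℓ : 0 ≤ ℓ) : 0 < 1 + ℓ * Υ := by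
  positivity

theorem strictMonoOn_div_one_add_mul (hΥ : 0 ≤ Υ) :
    StrictMonoOn (fun ℓ : ℝ ↦ ℓ / (1 + ℓ * Υ)) (Ici 0) := by
  intro x hx y hy hxy
  rw [div_lt_div_iff₀ (one_add_mul_pos_of_nonneg hΥ hx) (one_add_mul_pos_of_nonneg hΥ hy)]
  -- after cross-multiplying, the `x * y * Υ` terms cancel
  linarith

theorem monotone_one_sub_exp_neg_mul_one_add_mul {A : ℝ} (hA : 0 ≤ A) (hΥ : 0 ≤ Υ) :
    Monotone (fun ℓ : ℝ ↦ 1 - Real.exp (-A * (1 + ℓ * Υ))) := by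
  intro x y hxy
  have : -A * (1 + y * Υ) ≤ -A * (1 + x * Υ) := by
    nlinarith [mul_le_mul_of_nonneg_right hxy hΥ]
  have := Real.exp_le_exp.mpr this
  linarith

theorem one_sub_exp_neg_mul_one_add_mul_pos {A : ℝ} (hA : 0 < A) (hΥ : 0 ≤ Υ) {ℓ : ℝ}
    (hℓ : 0 ≤ ℓ) : 0 < 1 - Real.exp (-A * (1 + ℓ * Υ)) := by
  have := mul_pos hA (one_add_mul_pos_of_nonneg hΥ hℓ)
  have : Real.exp (-A * (1 + ℓ * Υ)) < 1 := Real.exp_lt_one_iff.mpr (by linarith)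
  linarith

end Load

theorem PSE_strictMono_in_load (C A Υ : ℝ) (hC : 0 < C) (hA : 0 < A) (hΥ : 0 ≤ Υ) :
    StrictMonoOn
      (fun ℓ : ℝ => C * (ℓ / (1 + ℓ * Υ)) * (1 - Real.exp (-A * (1 + ℓ * Υ))))
      (Set.Ici (0 : ℝ)) := by
  have hload : StrictMonoOn (fun ℓ : ℝ ↦ C * (ℓ / (1 + ℓ * Υ))) (Ici 0) :=
    (strictMono_mul_left_of_pos hC).comp_strictMonoOn (strictMonoOn_div_one_add_mul hΥ)
  exact hload.mul_monotoneOn₀ ((monotone_one_sub_exp_neg_mul_one_add_mul hA.le hΥ).monotoneOn _)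
    (fun ℓ hℓ ↦ mul_nonneg hC.le (div_nonneg hℓ (one_add_mul_pos_of_nonneg hΥ hℓ).le))
    (fun ℓ hℓ ↦ one_sub_exp_neg_mul_one_add_mul_pos hA hΥ hℓ)
end
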